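/- For every A ⊆ E: if A contains an OX-circuit of M then r'(A) = r(A) + 1, and otherwise r'(A) = r(A). -/

import Mathlib

open Set

namespace ESSplit

variable {α : Type*}

/-- A circuit of a matroid: a minimal dependent set. -/
def IsCircuit (M : Matroid α) (C : Set α) : Prop :=
  M.Dep C ∧ ∀ D, D ⊂ C → M.Indep D

/-- A binary matroid: one representable over GF(2). -/
def IsBinary (M : Matroid α) : Prop :=
  ∃ (n : ℕ) (φ : α → (Fin n → ZMod 2)),
    ∀ I, I ⊆ M.E → (M.Indep I ↔ LinearIndependent (ZMod 2) (fun x : I => φ x.1))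

/-- An OX-circuit: a circuit meeting `X` in an odd number of elements. -/
def IsOX (M : Matroid α) (X C : Set α) : Prop :=
  IsCircuit M C ∧ Odd (C ∩ X).ncard

/-- An EX-circuit: a circuit meeting `X` in an even number of elements. -/
def IsEX (M : Matroid α) (X C : Set α) : Prop :=
  IsCircuit M C ∧ Even (C ∩ X).ncard

/-- `D` is a union of two disjoint OX-circuits containing no EX-circuit. -/
def OXUnion (M : Matroid α) (X D : Set α) : Prop :=
  ∃ C₁ C₂, IsOX M X C₁ ∧ IsOX M X C₂ ∧ Disjoint C₁ C₂ ∧ D = C₁ ∪ C₂ ∧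
    ¬ ∃ C₀, IsEX M X C₀ ∧ C₀ ⊆ D

/-- The description of the circuits of the es-splitting matroid `M_X^e`. -/
def ESCircuit (M : Matroid α) (X : Set α) (e a γ : α) (C : Set α) : Prop :=
  C = {e, a, γ} ∨
  IsEX M X C ∨
  (OXUnion M X C ∧ ∀ D, OXUnion M X D → D ⊆ C → D = C) ∨
  (∃ C₀, IsOX M X C₀ ∧ C = C₀ ∪ {a}) ∨
  (∃ C₀, IsOX M X C₀ ∧ e ∉ C₀ ∧ C = C₀ ∪ {e, γ}) ∨
  (∃ C₀, IsOX M X C₀ ∧ e ∈ C₀ ∧ C = (C₀ \ {e}) ∪ {γ}) ∨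
  (∃ C₀, IsCircuit M C₀ ∧ e ∈ C₀ ∧ Odd (((C₀ \ {e}) ∩ X).ncard) ∧
      C = (C₀ \ {e}) ∪ {a, γ})

/-- `M'` is the es-splitting matroid `M_X^e` of `M` (with new elements `a`, `γ`):
it has ground set `M.E ∪ {a, γ}` and its circuits are exactly as described. -/
def IsESSplit (M M' : Matroid α) (X : Set α) (e a γ : α) : Prop :=
  M'.E = M.E ∪ {a, γ} ∧ ∀ C, IsCircuit M' C ↔ ESCircuit M X e a γ C

/-- The set `T(A)`. -/
def T (M : Matroid α) (X : Set α) (e : α) (A : Set α) : Set α :=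
  {x | x ∈ M.E \ A ∧ x ≠ e ∧ ∃ C, IsOX M X C ∧ x ∈ C ∧ e ∈ C ∧ C ⊆ A ∪ {e, x}}

/-- The set `F(A)`. -/
def F (M : Matroid α) (X A : Set α) : Set α :=
  {x | x ∈ M.closure A \ A ∧ ∃ C, IsOX M X C ∧ x ∈ C ∧ C ⊆ M.closure A}

/-- The rank of a set `A` in a (finite) matroid: the maximum size of an
independent subset of `A`. -/
noncomputable def rk (M : Matroid α) (A : Set α) : ℕ :=
  sSup {n | ∃ I, M.Indep I ∧ I ⊆ A ∧ I.ncard = n}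

end ESSplit

open ESSplit

/-!
If `φ` represents `M` over `GF(2)`, then on `E` the es-splitting matroid is represented by
`x ↦ (φ x, [x ∈ X])`: a vanishing sum of these vectors is a `φ`-cycle meeting `X` evenly, which
contains an EX-circuit or two disjoint OX-circuits, and conversely every circuit of `M'` inside
`E` is such a cycle. Projecting away the parity coordinate maps the span of the new vectors over
`A` onto that of the old ones, with kernel spanned by `(0, 1)`; so the rank goes up by one exactly
when `(0, 1)` is a sum of new vectors over `A`, i.e. when `A` contains a `φ`-cycle meeting `X`
oddly, and such a cycle contains an OX-circuit.
-/

open Module Submodule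

theorem LinearIndepOn.ncard_eq_finrank_span_image {K V ι : Type*} [DivisionRing K]
    [AddCommGroup V] [Module K V] {v : ι → V} {s : Set ι} (hs : LinearIndepOn K v s) :
    s.ncard = finrank K (span K (v '' s)) := by
  rw [Set.ncard, ← toENat_rank_span_set hs, finrank, Cardinal.toNat_toENat]

section Projection

variable {K V : Type*} [Field K] [AddCommGroup V] [Module K V]

theorem Submodule.finrank_map_fst_of_notMem {U : Submodule K (V × K)} (hU : ((0, 1) : V × K) ∉ U) :
    finrank K (U.map (LinearMap.fst K V K)) = finrank K U := by
  have hinj : Function.Injective ((LinearMap.fst K V K).comp U.subtype) := by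
    refine (injective_iff_map_eq_zero _).2 fun ⟨⟨x, c⟩, hx⟩ h0 => ?_
    obtain rfl : x = 0 := h0
    obtain rfl | hc := eq_or_ne c 0
    · rfl
    · exact absurd (by simpa [hc] using U.smul_mem c⁻¹ hx) hU
  have h := LinearMap.finrank_range_of_inj hinj
  rwa [LinearMap.range_comp, Submodule.range_subtype] at h

theorem Submodule.finrank_map_fst_add_one_of_mem {U : Submodule K (V × K)} [FiniteDimensional K U]
    (hU : ((0, 1) : V × K) ∈ U) :
    finrank K (U.map (LinearMap.fst K V K)) + 1 = finrank K U := by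
  have hker : LinearMap.ker ((LinearMap.fst K V K).comp U.subtype) = K ∙ ⟨_, hU⟩ := by
    ext ⟨⟨x, c⟩, hx⟩
    simp [Submodule.mem_span_singleton, eq_comm]
  have h := LinearMap.finrank_range_add_finrank_ker ((LinearMap.fst K V K).comp U.subtype)
  rwa [LinearMap.range_comp, Submodule.range_subtype, hker, finrank_span_singleton (by simp)] at h

end Projection

section CharTwo

variable {ι V : Type*} [AddCommGroup V] [Module (ZMod 2) V]

theorem ZMod.sum_smul_eq_sum_filter_ne_zero (t : Finset ι) (g : ι → ZMod 2) (v : ι → V) :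
    ∑ i ∈ t, g i • v i = ∑ i ∈ t with g i ≠ 0, v i := by
  classical
  rw [Finset.sum_filter]
  refine Finset.sum_congr rfl fun i _ => ?_
  obtain h | h : g i = 0 ∨ g i = 1 := by generalize g i = c; revert c; decide
  all_goals simp [h]

theorem not_linearIndepOn_iff_exists_finset_sum_eq_zero {v : ι → V} {s : Set ι} :
    ¬ LinearIndepOn (ZMod 2) v s ↔ ∃ S : Finset ι, S.Nonempty ∧ ↑S ⊆ s ∧ ∑ i ∈ S, v i = 0 := by
  classical
  rw [linearIndepOn_iff']
  constructor
  · intro h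
    push Not at h
    obtain ⟨t, g, hts, hsum, i, hit, hgi⟩ := h
    refine ⟨{i ∈ t | g i ≠ 0}, ⟨i, Finset.mem_filter.2 ⟨hit, hgi⟩⟩,
      fun j hj => hts (Finset.mem_filter.1 hj).1, ?_⟩
    rw [← ZMod.sum_smul_eq_sum_filter_ne_zero, hsum]
  · rintro ⟨S, ⟨i, hi⟩, hSs, hsum⟩ h
    simpa using h S 1 hSs (by simpa using hsum) i hi

theorem mem_span_image_iff_exists_finset_sum {v : ι → V} {s : Set ι} {x : V} :
    x ∈ span (ZMod 2) (v '' s) ↔ ∃ S : Finset ι, ↑S ⊆ s ∧ ∑ i ∈ S, v i = x := by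
  classical
  constructor
  · intro h
    obtain ⟨l, hl, rfl⟩ := (Finsupp.mem_span_image_iff_linearCombination _).1 h
    refine ⟨{i ∈ l.support | l i ≠ 0}, fun j hj => hl (Finset.mem_filter.1 hj).1, ?_⟩
    rw [Finsupp.linearCombination_apply, Finsupp.sum, ZMod.sum_smul_eq_sum_filter_ne_zero]
  · rintro ⟨S, hSs, rfl⟩
    exact sum_mem fun i hi => subset_span (mem_image_of_mem v (hSs hi))

end CharTwo

namespace ESSplit

variable {α : Type*}

theorem isCircuit_iff {M : Matroid α} {C : Set α} : IsCircuit M C ↔ M.IsCircuit C :=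
  Matroid.isCircuit_iff_forall_ssubset.symm

theorem rk_eq_finrank_span {K V : Type*} [DivisionRing K] [AddCommGroup V] [Module K V]
    {M : Matroid α} {v : α → V} {A : Set α} (hA : A.Finite)
    (hv : ∀ I ⊆ A, M.Indep I ↔ LinearIndepOn K v I) :
    rk M A = finrank K (span K (v '' A)) := by
  have : FiniteDimensional K (span K (v '' A)) := FiniteDimensional.span_of_finite K (hA.image v)
  refine IsGreatest.csSup_eq ⟨?_, ?_⟩
  · obtain ⟨B, hBA, -, hAB, hB⟩ := exists_linearIndepOn_extension (linearIndepOn_empty K v)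
      (empty_subset A)
    refine ⟨B, (hv B hBA).2 hB, hBA, ?_⟩
    rw [hB.ncard_eq_finrank_span_image, le_antisymm (span_mono (image_mono hBA)) (span_le.2 hAB)]
  · rintro _ ⟨I, hI, hIA, rfl⟩
    rw [((hv I hIA).1 hI).ncard_eq_finrank_span_image]
    exact Submodule.finrank_mono (span_mono (image_mono hIA))

variable {V : Type*} [AddCommGroup V]

noncomputable def withParity (φ : α → V) (X : Set α) (x : α) : V × ZMod 2 := (φ x, X.indicator 1 x)

theorem sum_withParity (φ : α → V) (X : Set α) (S : Finset α) :
    ∑ x ∈ S, withParity φ X x = (∑ x ∈ S, φ x, (((S : Set α) ∩ X).ncard : ZMod 2)) := by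
  classical
  ext
  · simp [withParity, Prod.fst_sum]
  · simp only [withParity, Prod.snd_sum, Set.indicator_apply, Pi.one_apply, Finset.sum_boole]
    rw [← Set.ncard_coe_finset, Finset.coe_filter]
    rfl

def Represents (K : Type*) [DivisionRing K] [Module K V] (M : Matroid α) (v : α → V) : Prop :=
  ∀ I ⊆ M.E, M.Indep I ↔ LinearIndepOn K v I

variable [Module (ZMod 2) V] {M : Matroid α} {φ : α → V} {X : Set α}

theorem dep_of_sum_eq_zero (hφ : Represents (ZMod 2) M φ)
    {S : Finset α} (hS : ↑S ⊆ M.E) (hne : S.Nonempty) (hsum : ∑ x ∈ S, φ x = 0) :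
    M.Dep S :=
  ⟨fun hI => not_linearIndepOn_iff_exists_finset_sum_eq_zero.2 ⟨S, hne, subset_rfl, hsum⟩
    ((hφ _ hS).1 hI), hS⟩

theorem exists_sum_withParity_of_isCircuit
    (hφ : Represents (ZMod 2) M φ) {C : Set α} (hC : M.IsCircuit C) :
    ∃ S : Finset α, ↑S = C ∧ ∑ x ∈ S, withParity φ X x = (0, ((C ∩ X).ncard : ZMod 2)) := by
  have hdep : ¬ LinearIndepOn (ZMod 2) φ C := by rw [← hφ C hC.subset_ground]; exact hC.not_indep
  obtain ⟨S, hne, hSC, hsum⟩ := not_linearIndepOn_iff_exists_finset_sum_eq_zero.1 hdep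
  obtain rfl :=
    hC.eq_of_dep_subset (dep_of_sum_eq_zero hφ (hSC.trans hC.subset_ground) hne hsum) hSC
  exact ⟨S, rfl, by rw [sum_withParity, hsum]⟩

theorem IsOX.exists_sum_withParity_eq
    (hφ : Represents (ZMod 2) M φ) {C : Set α} (hC : IsOX M X C) :
    ∃ S : Finset α, ↑S = C ∧ ∑ x ∈ S, withParity φ X x = (0, 1) := by
  simpa [ZMod.natCast_eq_one_iff_odd.2 hC.2] using
    exists_sum_withParity_of_isCircuit hφ (X := X) (isCircuit_iff.1 hC.1)

theorem IsEX.exists_sum_withParity_eq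
    (hφ : Represents (ZMod 2) M φ) {C : Set α} (hC : IsEX M X C) :
    ∃ S : Finset α, ↑S = C ∧ ∑ x ∈ S, withParity φ X x = 0 := by
  simpa [ZMod.natCast_eq_zero_iff_even.2 hC.2, Prod.mk_zero_zero] using
    exists_sum_withParity_of_isCircuit hφ (X := X) (isCircuit_iff.1 hC.1)

theorem exists_isCircuit_finset_subset
    (hφ : Represents (ZMod 2) M φ) {S : Finset α} (hS : ↑S ⊆ M.E)
    (hne : S.Nonempty) (hsum : ∑ x ∈ S, φ x = 0) :
    ∃ S₀ ⊆ S, M.IsCircuit S₀ ∧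
      ∑ x ∈ S₀, withParity φ X x = (0, (((S₀ : Set α) ∩ X).ncard : ZMod 2)) := by
  obtain ⟨C, hCS, hC⟩ := (dep_of_sum_eq_zero hφ hS hne hsum).exists_isCircuit_subset
  obtain ⟨S₀, rfl, hS₀⟩ := exists_sum_withParity_of_isCircuit hφ (X := X) hC
  exact ⟨S₀, Finset.coe_subset.1 hCS, hC, hS₀⟩

theorem exists_isOX_subset_of_sum_withParity_eq
    (hφ : Represents (ZMod 2) M φ) {S : Finset α} (hS : ↑S ⊆ M.E)
    (hsum : ∑ x ∈ S, withParity φ X x = (0, 1)) : ∃ C, IsOX M X C ∧ C ⊆ S := by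
  classical
  induction S using Finset.strongInduction with | H S ih =>
  have hφS : ∑ x ∈ S, φ x = 0 := by simpa [sum_withParity] using congrArg Prod.fst hsum
  have hne : S.Nonempty := Finset.nonempty_iff_ne_empty.2 fun h => by
    simpa [h] using congrArg Prod.snd hsum
  obtain ⟨S₀, hS₀S, hC, hS₀⟩ := exists_isCircuit_finset_subset hφ (X := X) hS hne hφS
  obtain hodd | heven := (Nat.even_or_odd ((S₀ : Set α) ∩ X).ncard).symm
  · exact ⟨S₀, ⟨isCircuit_iff.2 hC, hodd⟩, Finset.coe_subset.2 hS₀S⟩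
  obtain ⟨C, hC', hCS⟩ := ih (S \ S₀) (Finset.sdiff_ssubset hS₀S (by simpa using hC.nonempty))
    (subset_trans (by simp) hS) (by
      rw [Finset.sum_sdiff_eq_sub hS₀S, hsum, hS₀, ZMod.natCast_eq_zero_iff_even.2 heven]
      simp)
  exact ⟨C, hC', hCS.trans (by simp)⟩

theorem exists_isEX_or_disjoint_isOX_subset_of_sum_withParity_eq_zero
    (hφ : Represents (ZMod 2) M φ) {S : Finset α} (hS : ↑S ⊆ M.E)
    (hne : S.Nonempty) (hsum : ∑ x ∈ S, withParity φ X x = 0) :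
    (∃ C, IsEX M X C ∧ C ⊆ S) ∨
      ∃ C₁ C₂, IsOX M X C₁ ∧ IsOX M X C₂ ∧ Disjoint C₁ C₂ ∧ C₁ ∪ C₂ ⊆ S := by
  classical
  have hφS : ∑ x ∈ S, φ x = 0 := by simpa [sum_withParity] using congrArg Prod.fst hsum
  obtain ⟨S₀, hS₀S, hC, hS₀⟩ := exists_isCircuit_finset_subset hφ (X := X) hS hne hφS
  obtain heven | hodd := Nat.even_or_odd (((S₀ : Set α) ∩ X).ncard)
  · exact .inl ⟨S₀, ⟨isCircuit_iff.2 hC, heven⟩, Finset.coe_subset.2 hS₀S⟩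
  obtain ⟨C, hC', hCS⟩ := exists_isOX_subset_of_sum_withParity_eq hφ (S := S \ S₀)
    (subset_trans (by simp) hS) (by
      rw [Finset.sum_sdiff_eq_sub hS₀S, hsum, hS₀, ZMod.natCast_eq_one_iff_odd.2 hodd]
      simp)
  rw [Finset.coe_sdiff] at hCS
  exact .inr ⟨S₀, C, ⟨isCircuit_iff.2 hC, hodd⟩, hC', disjoint_sdiff_right.mono_right hCS,
    union_subset (Finset.coe_subset.2 hS₀S) (hCS.trans sdiff_subset)⟩

theorem zero_one_mem_span_withParity_iff
    (hφ : Represents (ZMod 2) M φ) {A : Set α} (hA : A ⊆ M.E) :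
    ((0, 1) : V × ZMod 2) ∈ span (ZMod 2) (withParity φ X '' A) ↔ ∃ C, IsOX M X C ∧ C ⊆ A := by
  rw [mem_span_image_iff_exists_finset_sum]
  constructor
  · rintro ⟨S, hSA, hsum⟩
    obtain ⟨C, hC, hCS⟩ := exists_isOX_subset_of_sum_withParity_eq hφ (hSA.trans hA) hsum
    exact ⟨C, hC, hCS.trans hSA⟩
  · rintro ⟨C, hC, hCA⟩
    obtain ⟨S, rfl, hsum⟩ := hC.exists_sum_withParity_eq hφ
    exact ⟨S, hCA, hsum⟩

section Split

variable {M' : Matroid α} {e a γ : α}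

theorem IsESSplit.isEX_or_oxUnion_of_isCircuit (hsplit : IsESSplit M M' X e a γ)
    (haE : a ∉ M.E) (hγE : γ ∉ M.E) {C : Set α} (hC : M'.IsCircuit C) (hCE : C ⊆ M.E) :
    IsEX M X C ∨ OXUnion M X C := by
  rcases (hsplit.2 C).1 (isCircuit_iff.2 hC) with rfl | h | h | ⟨C₀, -, rfl⟩ | ⟨C₀, -, -, rfl⟩ |
    ⟨C₀, -, -, rfl⟩ | ⟨C₀, -, -, -, rfl⟩
  · exact absurd (hCE (by simp)) haE
  · exact .inl h
  · exact .inr h.1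
  · exact absurd (hCE (by simp)) haE
  · exact absurd (hCE (by simp)) hγE
  · exact absurd (hCE (by simp)) hγE
  · exact absurd (hCE (by simp)) haE

theorem OXUnion.exists_sum_withParity_eq
    (hφ : Represents (ZMod 2) M φ) {C : Set α} (hC : OXUnion M X C) :
    ∃ S : Finset α, ↑S = C ∧ ∑ x ∈ S, withParity φ X x = 0 := by
  classical
  obtain ⟨C₁, C₂, h₁, h₂, hdisj, rfl, -⟩ := hC
  obtain ⟨S₁, rfl, hS₁⟩ := h₁.exists_sum_withParity_eq hφ
  obtain ⟨S₂, rfl, hS₂⟩ := h₂.exists_sum_withParity_eq hφ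
  refine ⟨S₁ ∪ S₂, Finset.coe_union _ _, ?_⟩
  rw [Finset.sum_union (Finset.disjoint_coe.1 hdisj), hS₁, hS₂, Prod.mk_add_mk, add_zero]
  exact congrArg _ (CharTwo.add_self_eq_zero 1)

theorem IsESSplit.exists_isCircuit_subset (hsplit : IsESSplit M M' X e a γ)
    (hφ : Represents (ZMod 2) M φ) {S : Finset α} (hS : ↑S ⊆ M.E)
    (hne : S.Nonempty) (hsum : ∑ x ∈ S, withParity φ X x = 0) :
    ∃ C, M'.IsCircuit C ∧ C ⊆ S := by
  have hEX {C : Set α} (hC : IsEX M X C) : M'.IsCircuit C :=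
    isCircuit_iff.1 ((hsplit.2 C).2 (.inr (.inl hC)))
  obtain ⟨C, hC, hCS⟩ | ⟨C₁, C₂, h₁, h₂, hdisj, hsub⟩ :=
    exists_isEX_or_disjoint_isOX_subset_of_sum_withParity_eq_zero hφ hS hne hsum
  · exact ⟨C, hEX hC, hCS⟩
  by_cases hEX₀ : ∃ C₀, IsEX M X C₀ ∧ C₀ ⊆ C₁ ∪ C₂
  · obtain ⟨C₀, hC₀, hC₀sub⟩ := hEX₀
    exact ⟨C₀, hEX hC₀, hC₀sub.trans hsub⟩
  have hfin : {U | OXUnion M X U ∧ U ⊆ S}.Finite :=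
    S.finite_toSet.finite_subsets.subset fun U hU => hU.2
  obtain ⟨U, -, hU⟩ := hfin.exists_le_minimal ⟨⟨C₁, C₂, h₁, h₂, hdisj, rfl, hEX₀⟩, hsub⟩
  refine ⟨U, isCircuit_iff.1 ((hsplit.2 U).2 (.inr (.inr (.inl ⟨hU.prop.1, ?_⟩)))), hU.prop.2⟩
  exact fun D hD hDU => (hU.eq_of_ge ⟨hD, hDU.trans hU.prop.2⟩ hDU).symm

theorem IsESSplit.indep_iff (hsplit : IsESSplit M M' X e a γ)
    (hφ : Represents (ZMod 2) M φ) (haE : a ∉ M.E) (hγE : γ ∉ M.E)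
    {D : Set α} (hD : D ⊆ M.E) : M'.Indep D ↔ LinearIndepOn (ZMod 2) (withParity φ X) D := by
  refine ⟨fun hI => by_contra fun hdep => ?_, fun hli => ?_⟩
  · obtain ⟨S, hne, hSD, hsum⟩ := not_linearIndepOn_iff_exists_finset_sum_eq_zero.1 hdep
    obtain ⟨C, hC, hCS⟩ := hsplit.exists_isCircuit_subset hφ (hSD.trans hD) hne hsum
    exact hC.not_indep (hI.subset (hCS.trans hSD))
  · rw [Matroid.indep_iff_not_dep]
    refine ⟨fun hdep => ?_, hD.trans (hsplit.1 ▸ subset_union_left)⟩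
    obtain ⟨C, hCD, hC⟩ := hdep.exists_isCircuit_subset
    obtain ⟨S, rfl, hsum⟩ := (hsplit.isEX_or_oxUnion_of_isCircuit haE hγE hC (hCD.trans hD)).elim
      (·.exists_sum_withParity_eq hφ) (·.exists_sum_withParity_eq hφ)
    exact not_linearIndepOn_iff_exists_finset_sum_eq_zero.2
      ⟨S, by simpa using hC.nonempty, hCD, hsum⟩ hli

end Split

end ESSplit

theorem rank_es_splitting_general
    {α : Type*} (M M' : Matroid α) (X : Set α) (e a γ : α)
    (hfin : M.E.Finite) (hbin : IsBinary M)
    (haE : a ∉ M.E) (hγE : γ ∉ M.E)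
    (hsplit : IsESSplit M M' X e a γ)
    (A : Set α) (hAE : A ⊆ M.E) :
    ((∃ C, IsOX M X C ∧ C ⊆ A) → rk M' A = rk M A + 1) ∧
    ((¬ ∃ C, IsOX M X C ∧ C ⊆ A) → rk M' A = rk M A) := by
  obtain ⟨n, φ, hφ⟩ := hbin
  have hA : A.Finite := hfin.subset hAE
  have hrk : rk M A = finrank (ZMod 2) ((span (ZMod 2) (withParity φ X '' A)).map
      (LinearMap.fst (ZMod 2) _ (ZMod 2))) := by
    rw [map_span, ← image_comp]
    exact rk_eq_finrank_span hA fun I hIA => hφ I (hIA.trans hAE)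
  have hrk' : rk M' A = finrank (ZMod 2) (span (ZMod 2) (withParity φ X '' A)) :=
    rk_eq_finrank_span hA fun I hIA => hsplit.indep_iff hφ haE hγE (hIA.trans hAE)
  have : FiniteDimensional (ZMod 2) (span (ZMod 2) (withParity φ X '' A)) :=
    FiniteDimensional.span_of_finite _ (hA.image _)
  rw [hrk, hrk', ← zero_one_mem_span_withParity_iff hφ hAE]
  exact ⟨fun h => (finrank_map_fst_add_one_of_mem h).symm,
    fun h => (finrank_map_fst_of_notMem h).symm⟩

theorem rank_es_splitting
    {α : Type*} (M M' : Matroid α) (X : Set α) (e a γ : α)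
    (hfin : M.E.Finite) (hbin : IsBinary M)
    (hXE : X ⊆ M.E) (heX : e ∈ X) (haE : a ∉ M.E) (hγE : γ ∉ M.E) (haγ : a ≠ γ)
    (hsplit : IsESSplit M M' X e a γ)
    (A : Set α) (hAE : A ⊆ M.E) :
    ((∃ C, IsOX M X C ∧ C ⊆ A) → rk M' A = rk M A + 1) ∧
    ((¬ ∃ C, IsOX M X C ∧ C ⊆ A) → rk M' A = rk M A) :=
  rank_es_splitting_general M M' X e a γ hfin hbin haE hγE hsplit A hAE
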